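/- If a, b ∈ ℝ^n and V is a finite subset of the ordinary line segment between a and b, then tconv(V) ⊆ convexHull(tconv({a, b})). -/

import Mathlib

/-- A set `U ⊆ ℝ^n` is tropically convex (min-plus convention). -/
def TropConvex {n : ℕ} (U : Set (Fin n → ℝ)) : Prop :=
  ∀ x ∈ U, ∀ y ∈ U, ∀ a b : ℝ, min a b = 0 →
    (fun i => min (a + x i) (b + y i)) ∈ U

/-- The tropical convex hull: the intersection of all tropically convex sets containing `U`. -/
def tconv {n : ℕ} (U : Set (Fin n → ℝ)) : Set (Fin n → ℝ) :=
  ⋂₀ {V | TropConvex V ∧ U ⊆ V}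

/-!
A tropical combination of points `a + t • (b - a)` of the segment has the form `a + g ∘ (b - a)`
with `g t = min_k (λ_k + t_k * t)`: a concave function with `g 0 = 0` and slopes in `[0, 1]`.
Such points form a tropically convex set, so they contain the tropical hull of the segment.
On the finite set of values `0` and `b i - a i`, such a `g` agrees with a convex combination of
the hinges `t ↦ min r t - min r 0`, the weight at a breakpoint being the drop of slope there;
and `a + (min r (b - a) - min r 0)` runs through the tropical segment `tconv {a, b}`.
-/

theorem tropConvex_tconv {n : ℕ} (U : Set (Fin n → ℝ)) : TropConvex (tconv U) :=
  fun x hx y hy α β hαβ W hW => hW.1 x (hx W hW) y (hy W hW) α β hαβ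

theorem subset_tconv {n : ℕ} (U : Set (Fin n → ℝ)) : U ⊆ tconv U :=
  fun _ hx _ hW => hW.2 hx

theorem TropConvex.tconv_subset {n : ℕ} {U W : Set (Fin n → ℝ)} (hW : TropConvex W)
    (hUW : U ⊆ W) : tconv U ⊆ W :=
  Set.sInter_subset_of_mem ⟨hW, hUW⟩

theorem hinge_mem_tconv_pair {n : ℕ} (a b : Fin n → ℝ) (r : ℝ) :
    (fun i => a i + (min r (b i - a i) - min r 0)) ∈ tconv {a, b} := by
  have hmin : min (r - min r 0) (-min r 0) = 0 := by
    rw [neg_eq_zero_sub, min_sub_sub_right, sub_self]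
  convert tropConvex_tconv _ a (subset_tconv _ (Set.mem_insert a {b}))
    b (subset_tconv _ (Set.mem_insert_of_mem a rfl)) _ _ hmin
    using 2 with i
  generalize min r 0 = c
  rw [min_def, min_def]
  split_ifs <;> linarith

structure IsConcaveUnitSlope (g : ℝ → ℝ) : Prop where
  map_zero : g 0 = 0
  monotone : Monotone g
  monotone_id_sub : Monotone fun t => t - g t
  concaveOn : ConcaveOn ℝ Set.univ g

namespace IsConcaveUnitSlope

theorem const_mul {t : ℝ} (h₀ : 0 ≤ t) (h₁ : t ≤ 1) : IsConcaveUnitSlope (t * ·) where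
  map_zero := mul_zero t
  monotone := monotone_mul_left_of_nonneg h₀
  monotone_id_sub _ _ hpq := by nlinarith
  concaveOn := (concaveOn_id convex_univ).smul h₀

theorem min_add {g₁ g₂ : ℝ → ℝ} (h₁ : IsConcaveUnitSlope g₁) (h₂ : IsConcaveUnitSlope g₂)
    {α β : ℝ} (hαβ : min α β = 0) : IsConcaveUnitSlope fun t => min (α + g₁ t) (β + g₂ t) where
  map_zero := by simp [h₁.map_zero, h₂.map_zero, hαβ]
  monotone := (monotone_const.add h₁.monotone).min (monotone_const.add h₂.monotone)
  monotone_id_sub p q hpq := by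
    have := h₁.monotone_id_sub hpq
    have := h₂.monotone_id_sub hpq
    simp only [min_def]
    split_ifs <;> linarith
  concaveOn := ((concaveOn_const α convex_univ).add h₁.concaveOn).inf
    ((concaveOn_const β convex_univ).add h₂.concaveOn)

theorem sub_le_sub {g : ℝ → ℝ} (hg : IsConcaveUnitSlope g) {s t : ℝ} (hst : s ≤ t) :
    g t - g s ≤ t - s := by
  linarith [hg.monotone_id_sub hst]

end IsConcaveUnitSlope

def concaveProfileSet {n : ℕ} (a b : Fin n → ℝ) : Set (Fin n → ℝ) :=
  {x | ∃ g, IsConcaveUnitSlope g ∧ x = fun i => a i + g (b i - a i)}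

theorem tropConvex_concaveProfileSet {n : ℕ} (a b : Fin n → ℝ) :
    TropConvex (concaveProfileSet a b) := by
  rintro _ ⟨g₁, hg₁, rfl⟩ _ ⟨g₂, hg₂, rfl⟩ α β hαβ
  refine ⟨_, hg₁.min_add hg₂ hαβ, funext fun i => ?_⟩
  simp only [add_left_comm α, add_left_comm β, min_add_add_left]

theorem segment_subset_concaveProfileSet {n : ℕ} (a b : Fin n → ℝ) :
    segment ℝ a b ⊆ concaveProfileSet a b := by
  rw [segment_eq_image']
  rintro _ ⟨t, ⟨ht₀, ht₁⟩, rfl⟩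
  exact ⟨(t * ·), .const_mul ht₀ ht₁, rfl⟩

theorem ConcaveOn.sub_le_slope_mul_sub {g : ℝ → ℝ} (hg : ConcaveOn ℝ Set.univ g) {x y t : ℝ}
    (hxy : x < y) (hyt : y ≤ t) : g t - g y ≤ (g y - g x) / (y - x) * (t - y) := by
  rcases hyt.eq_or_lt with rfl | hyt
  · simp
  · exact (div_le_iff₀ (sub_pos.2 hyt)).1 (hg.slope_anti_adjacent trivial trivial hxy hyt)

theorem sum_mul_min_of_forall_le {D : Finset ℝ} {t : ℝ} (w : ℝ → ℝ) (ht : ∀ r ∈ D, t ≤ r) :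
    ∑ r ∈ D, w r * min r t = (∑ r ∈ D, w r) * t := by
  rw [Finset.sum_mul]
  exact Finset.sum_congr rfl fun r hr => by rw [min_eq_right (ht r hr)]

theorem ConcaveOn.exists_sum_mul_min_eq {g : ℝ → ℝ} (hconc : ConcaveOn ℝ Set.univ g)
    (hmono : Monotone g) {D : Finset ℝ} {x₀ m : ℝ} (hx₀ : IsLeast (D : Set ℝ) x₀)
    (hm : ∀ t, x₀ ≤ t → g t - g x₀ ≤ m * (t - x₀)) :
    ∃ w : ℝ → ℝ, (∀ r ∈ D, 0 ≤ w r) ∧ ∑ r ∈ D, w r = m ∧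
      ∃ c, ∀ t ∈ D, ∑ r ∈ D, w r * min r t = g t + c := by
  induction D using Finset.induction_on_min generalizing x₀ m with
  | empty => exact absurd hx₀.1 (Finset.notMem_empty x₀)
  | insert x D hxD ih =>
    have hxD' : ∀ t ∈ insert x D, x ≤ t := by
      simpa using fun t ht => (hxD t ht).le
    obtain rfl : x₀ = x := hx₀.unique ⟨Finset.mem_insert_self x D, hxD'⟩
    rcases D.eq_empty_or_nonempty with rfl | hne
    · have hm₀ : 0 ≤ m := by
        linarith [hm (x₀ + 1) (by linarith), hmono (show x₀ ≤ x₀ + 1 by linarith)]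
      exact ⟨fun _ => m, by simpa using hm₀, by simp, m * x₀ - g x₀, by simp⟩
    set y := D.min' hne
    have hxy : x₀ < y := hxD y (D.min'_mem hne)
    set σ := (g y - g x₀) / (y - x₀)
    have hσ : σ * (y - x₀) = g y - g x₀ := div_mul_cancel₀ _ (sub_ne_zero.2 hxy.ne')
    have hσ_le : σ ≤ m := (div_le_iff₀ (sub_pos.2 hxy)).2 (hm y hxy.le)
    obtain ⟨w, hw₀, hw₁, c, hwc⟩ :=
      ih (D.isLeast_min' hne) fun t hyt => hconc.sub_le_slope_mul_sub hxy hyt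
    have hwc' : ∀ t ∈ insert x₀ D, ∑ r ∈ D, w r * min r t = g t + c := by
      intro t ht
      rcases Finset.mem_insert.1 ht with rfl | ht
      · have hy := sum_mul_min_of_forall_le w fun r hr => (D.isLeast_min' hne).2 hr
        rw [hwc y (D.min'_mem hne), hw₁] at hy
        rw [sum_mul_min_of_forall_le w fun r hr => (hxD r hr).le, hw₁]
        linarith
      · exact hwc t ht
    have hx₀D : x₀ ∉ D := fun h => lt_irrefl x₀ (hxD x₀ h)
    have hupd : ∀ r ∈ D, Function.update w x₀ (m - σ) r = w r := fun r hr =>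
      Function.update_of_ne (hxD r hr).ne' _ _
    refine ⟨Function.update w x₀ (m - σ), ?_, ?_, (m - σ) * x₀ + c, fun t ht => ?_⟩
    · intro r hr
      rcases Finset.mem_insert.1 hr with rfl | hr
      · simpa using hσ_le
      · rw [hupd r hr]
        exact hw₀ r hr
    · rw [Finset.sum_insert hx₀D, Finset.sum_congr rfl hupd, hw₁, Function.update_self]
      ring
    · rw [Finset.sum_insert hx₀D, Finset.sum_congr rfl fun r hr => by rw [hupd r hr],
        Function.update_self, hwc' t ht, min_eq_left (hxD' t ht)]
      ring

theorem concaveProfileSet_subset_convexHull {n : ℕ} (a b : Fin n → ℝ) :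
    concaveProfileSet a b ⊆ convexHull ℝ (tconv {a, b}) := by
  classical
  rintro _ ⟨g, hg, rfl⟩
  set D := insert 0 (Finset.univ.image fun i => b i - a i)
  have h0 : (0 : ℝ) ∈ D := Finset.mem_insert_self _ _
  have hd : ∀ i, b i - a i ∈ D := fun i =>
    Finset.mem_insert_of_mem (Finset.mem_image_of_mem _ (Finset.mem_univ i))
  obtain ⟨w, hw₀, hw₁, c, hwc⟩ := hg.concaveOn.exists_sum_mul_min_eq hg.monotone
    (D.isLeast_min' ⟨0, h0⟩) (m := 1) fun t ht => by simpa using hg.sub_le_sub ht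
  have hx : (fun i => a i + g (b i - a i))
      = ∑ r ∈ D, w r • fun i => a i + (min r (b i - a i) - min r 0) := by
    funext i
    simp only [Finset.sum_apply, Pi.smul_apply, smul_eq_mul, mul_add, mul_sub,
      Finset.sum_add_distrib, Finset.sum_sub_distrib, ← Finset.sum_mul, hw₁, hwc _ (hd i),
      hwc 0 h0, hg.map_zero]
    ring
  rw [hx]
  exact (convex_convexHull ℝ _).sum_mem hw₀ hw₁ fun r _ =>
    subset_convexHull ℝ _ (hinge_mem_tconv_pair a b r)

theorem tconv_finite_subset_segment_general (n : ℕ) (a b : Fin n → ℝ)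
    (V : Set (Fin n → ℝ)) (hV : V ⊆ segment ℝ a b) :
    tconv V ⊆ convexHull ℝ (tconv {a, b}) :=
  ((tropConvex_concaveProfileSet a b).tconv_subset
    (hV.trans (segment_subset_concaveProfileSet a b))).trans
    (concaveProfileSet_subset_convexHull a b)

theorem tconv_finite_subset_segment (n : ℕ) (a b : Fin n → ℝ)
    (V : Set (Fin n → ℝ)) (hVfin : V.Finite) (hV : V ⊆ segment ℝ a b) :
    tconv V ⊆ convexHull ℝ (tconv {a, b}) :=
  tconv_finite_subset_segment_general n a b V hV
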